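/- arXiv:1508.01726 — 4 statements merged into one kernel-verified Lean document; each statement's English description precedes it below -/
import Mathlib

section
/- Let ξ be a positive irrational real number and suppose (a,b) ∈ 𝒢. Then: (i) if (a,b) ∈ 𝒰₂(ξ), then (a,b) is an upper boundary point for ξ if and only if (a,b) ∈ 𝒰₁(ξ); (ii) if (a,b) ∈ ℒ₁(ξ), then (a,b) is a lower boundary point for ξ if and only if (a,b) ∈ ℒ₂(ξ). -/
open Real Finset

/-- `𝒩` is encoded by pairs `x : ℕ × ℕ` with `x ≠ (0,0)`.
The upper set `𝒰(ξ) = {(a,b) ∈ 𝒩 : a > bξ}`. -/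
def Uset (ξ : ℝ) : Set (ℕ × ℕ) := {x | x ≠ (0, 0) ∧ (x.2 : ℝ) * ξ < (x.1 : ℝ)}

/-- The lower set `ℒ(ξ) = {(a,b) ∈ 𝒩 : a < bξ}`. -/
def Lset (ξ : ℝ) : Set (ℕ × ℕ) := {x | x ≠ (0, 0) ∧ (x.1 : ℝ) < (x.2 : ℝ) * ξ}

/-- `𝒢 = {(a,b) ∈ 𝒩 : gcd(a,b) = 1}`. -/
def Gset : Set (ℕ × ℕ) := {x | x ≠ (0, 0) ∧ Nat.Coprime x.1 x.2}

/-- `𝒰₁(ξ)`: elements `(a,b)` of `𝒰(ξ)` with `a/b ≤ m/n` (by cross multiplication)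
for every `(m,n) ∈ 𝒰(ξ)` with `m ≤ a`. -/
def U1 (ξ : ℝ) : Set (ℕ × ℕ) :=
  {x | x ∈ Uset ξ ∧ ∀ y ∈ Uset ξ, y.1 ≤ x.1 → x.1 * y.2 ≤ y.1 * x.2}

/-- `𝒰₂(ξ)`: elements `(a,b)` of `𝒰(ξ)` with `a/b ≤ m/n` for every `(m,n) ∈ 𝒰(ξ)`
with `n ≤ b`. -/
def U2 (ξ : ℝ) : Set (ℕ × ℕ) :=
  {x | x ∈ Uset ξ ∧ ∀ y ∈ Uset ξ, y.2 ≤ x.2 → x.1 * y.2 ≤ y.1 * x.2}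

/-- `ℒ₁(ξ)`: elements `(a,b)` of `ℒ(ξ)` with `a/b ≥ m/n` for every `(m,n) ∈ ℒ(ξ)`
with `m ≤ a`. -/
def L1 (ξ : ℝ) : Set (ℕ × ℕ) :=
  {x | x ∈ Lset ξ ∧ ∀ y ∈ Lset ξ, y.1 ≤ x.1 → y.1 * x.2 ≤ x.1 * y.2}

/-- `ℒ₂(ξ)`: elements `(a,b)` of `ℒ(ξ)` with `a/b ≥ m/n` for every `(m,n) ∈ ℒ(ξ)`
with `n ≤ b`. -/
def L2 (ξ : ℝ) : Set (ℕ × ℕ) :=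
  {x | x ∈ Lset ξ ∧ ∀ y ∈ Lset ξ, y.2 ≤ x.2 → y.1 * x.2 ≤ x.1 * y.2}

/-- `(a,b)` is an upper or lower best approximation for `ξ`. -/
def BestApprox (ξ : ℝ) (x : ℕ × ℕ) : Prop :=
  x ∈ Gset ∩ U1 ξ ∨ x ∈ Gset ∩ L2 ξ

/-- A factorization of a positive rational `α ≠ 1`: a tuple of fractions `r n / s n` of
positive integers, none equal to `1`, with `gcd (r m) (s n) = 1` for all `m, n`, whose
product is `α`. -/
def IsFactorization (α : ℚ) {N : ℕ} (r s : Fin N → ℕ) : Prop :=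
  (∀ n, 0 < r n) ∧ (∀ n, 0 < s n) ∧ (∀ n, (r n : ℚ) / (s n : ℚ) ≠ 1) ∧
    (∀ m n, Nat.Coprime (r m) (s n)) ∧ (∏ n, (r n : ℚ) / (s n : ℚ)) = α

/-- The measure function `f_A(t) = (Σₙ m(rₙ/sₙ)^t)^{1/t}` of a factorization, where
`m(rₙ/sₙ) = log max(rₙ, sₙ)`. -/
noncomputable def fmeas {N : ℕ} (r s : Fin N → ℕ) (t : ℝ) : ℝ :=
  (∑ n, (Real.log ((max (r n) (s n) : ℕ) : ℝ)) ^ t) ^ (1 / t)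

/-- `(a,b)` is an upper boundary point for `ξ`: `(a,b) ∈ 𝒰(ξ)` and `(a,b+1) ∈ ℒ(ξ)`. -/
def UpperBoundary (ξ : ℝ) (x : ℕ × ℕ) : Prop :=
  x ∈ Uset ξ ∧ (x.1, x.2 + 1) ∈ Lset ξ

/-- `(a,b)` is a lower boundary point for `ξ`: `(a,b) ∈ ℒ(ξ)` and `(a+1,b) ∈ 𝒰(ξ)`. -/
def LowerBoundary (ξ : ℝ) (x : ℕ × ℕ) : Prop :=
  x ∈ Lset ξ ∧ (x.1 + 1, x.2) ∈ Uset ξ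

/-- `(a,b)` is a boundary point for `ξ`. -/
def Boundary (ξ : ℝ) (x : ℕ × ℕ) : Prop :=
  UpperBoundary ξ x ∨ LowerBoundary ξ x

/-!
For irrational `ξ` every nonzero pair lies strictly above or strictly below the line `a = bξ`.
If `(a,b) ∈ 𝒰₁` and `(a,b+1)` were also above the line, comparing the two with the same
numerator `a` would force `a = 0`, which is impossible for `ξ > 0`; hence `(a,b+1)` lies below
it. Conversely, if `(a,b+1)` is below the line, then every upper point `(m,n)` with `m ≤ a`
satisfies `nξ < m ≤ a < (b+1)ξ`, so `n ≤ b` and the defining inequality of `𝒰₂` gives the one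
of `𝒰₁`. The lower case is symmetric.
-/

section BoundaryPoints

variable {ξ : ℝ} {x y : ℕ × ℕ}

lemma fst_pos_of_mem_Uset (hξ : 0 ≤ ξ) (hx : x ∈ Uset ξ) : 0 < x.1 := by
  have : (0 : ℝ) < x.1 := lt_of_le_of_lt (by positivity) hx.2
  exact_mod_cast this

lemma snd_pos_of_mem_Lset (hx : x ∈ Lset ξ) : 0 < x.2 := by
  refine Nat.pos_of_ne_zero fun h => ?_
  have := hx.2
  simp only [h, CharP.cast_eq_zero, zero_mul] at this
  exact (Nat.cast_nonneg x.1).not_gt this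

lemma mem_Uset_or_mem_Lset (hξ : Irrational ξ) (hx : x ≠ (0, 0)) :
    x ∈ Uset ξ ∨ x ∈ Lset ξ := by
  rcases Nat.eq_zero_or_pos x.2 with h | h
  · have : x.1 ≠ 0 := fun h1 => hx (Prod.ext h1 h)
    exact .inl ⟨hx, by simp only [h, CharP.cast_eq_zero, zero_mul]; positivity⟩
  · rcases ((hξ.natCast_mul h.ne').ne_nat x.1).lt_or_gt with hlt | hlt
    · exact .inl ⟨hx, hlt⟩
    · exact .inr ⟨hx, hlt⟩

lemma snd_lt_of_mem_Uset_of_mem_Lset (hξ : 0 < ξ) (hy : y ∈ Uset ξ) (hx : x ∈ Lset ξ)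
    (h : y.1 ≤ x.1) : y.2 < x.2 := by
  have : (y.2 : ℝ) * ξ < x.2 * ξ := calc
    _ < (y.1 : ℝ) := hy.2
    _ ≤ x.1 := by exact_mod_cast h
    _ < _ := hx.2
  exact_mod_cast lt_of_mul_lt_mul_right this hξ.le

lemma fst_lt_of_mem_Lset_of_mem_Uset (hξ : 0 ≤ ξ) (hy : y ∈ Lset ξ) (hx : x ∈ Uset ξ)
    (h : y.2 ≤ x.2) : y.1 < x.1 := by
  have : (y.1 : ℝ) < x.1 := calc
    _ < (y.2 : ℝ) * ξ := hy.2
    _ ≤ x.2 * ξ := by gcongr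
    _ < x.1 := hx.2
  exact_mod_cast this

lemma mem_U1_of_upperBoundary_of_mem_U2 (hξ : 0 < ξ) (hx : UpperBoundary ξ x)
    (hx₂ : x ∈ U2 ξ) : x ∈ U1 ξ :=
  ⟨hx.1, fun y hy h =>
    hx₂.2 y hy (Nat.lt_succ_iff.mp (snd_lt_of_mem_Uset_of_mem_Lset hξ hy hx.2 h))⟩

lemma mem_L2_of_lowerBoundary_of_mem_L1 (hξ : 0 ≤ ξ) (hx : LowerBoundary ξ x)
    (hx₁ : x ∈ L1 ξ) : x ∈ L2 ξ :=
  ⟨hx.1, fun y hy h =>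
    hx₁.2 y hy (Nat.lt_succ_iff.mp (fst_lt_of_mem_Lset_of_mem_Uset hξ hy hx.2 h))⟩

lemma upperBoundary_of_mem_U1 (hξ : 0 < ξ) (hirr : Irrational ξ) (hx : x ∈ U1 ξ) :
    UpperBoundary ξ x := by
  refine ⟨hx.1, (mem_Uset_or_mem_Lset hirr (by simp)).resolve_left fun hU => ?_⟩
  have hle : x.1 * (x.2 + 1) ≤ x.1 * x.2 := hx.2 _ hU le_rfl
  have hpos := fst_pos_of_mem_Uset hξ.le hx.1
  rw [mul_add_one] at hle
  omega

lemma lowerBoundary_of_mem_L2 (hirr : Irrational ξ) (hx : x ∈ L2 ξ) : LowerBoundary ξ x := by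
  refine ⟨hx.1, (mem_Uset_or_mem_Lset hirr (by simp)).resolve_right fun hL => ?_⟩
  have hle : (x.1 + 1) * x.2 ≤ x.1 * x.2 := hx.2 _ hL le_rfl
  have hpos := snd_pos_of_mem_Lset hx.1
  rw [add_one_mul] at hle
  omega

lemma upperBoundary_iff_mem_U1 (hξ : 0 < ξ) (hirr : Irrational ξ) (hx₂ : x ∈ U2 ξ) :
    UpperBoundary ξ x ↔ x ∈ U1 ξ :=
  ⟨fun h => mem_U1_of_upperBoundary_of_mem_U2 hξ h hx₂, upperBoundary_of_mem_U1 hξ hirr⟩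

lemma lowerBoundary_iff_mem_L2 (hξ : 0 ≤ ξ) (hirr : Irrational ξ) (hx₁ : x ∈ L1 ξ) :
    LowerBoundary ξ x ↔ x ∈ L2 ξ :=
  ⟨fun h => mem_L2_of_lowerBoundary_of_mem_L1 hξ h hx₁, lowerBoundary_of_mem_L2 hirr⟩

end BoundaryPoints

theorem stmt_16_general (ξ : ℝ) (hpos : 0 < ξ) (hirr : Irrational ξ) (a b : ℕ) :
    ((a, b) ∈ U2 ξ → (UpperBoundary ξ (a, b) ↔ (a, b) ∈ U1 ξ)) ∧
    ((a, b) ∈ L1 ξ → (LowerBoundary ξ (a, b) ↔ (a, b) ∈ L2 ξ)) :=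
  ⟨upperBoundary_iff_mem_U1 hpos hirr, lowerBoundary_iff_mem_L2 hpos.le hirr⟩

/-- Lemma `BoundaryBA`: for `(a,b) ∈ 𝒢`, if `(a,b) ∈ 𝒰₂(ξ)` then `(a,b)`
is an upper boundary point iff `(a,b) ∈ 𝒰₁(ξ)`; if `(a,b) ∈ ℒ₁(ξ)` then `(a,b)` is a
lower boundary point iff `(a,b) ∈ ℒ₂(ξ)`. -/
theorem stmt_16 (ξ : ℝ) (hpos : 0 < ξ) (hirr : Irrational ξ) (a b : ℕ)
    (hG : (a, b) ∈ Gset) :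
    ((a, b) ∈ U2 ξ → (UpperBoundary ξ (a, b) ↔ (a, b) ∈ U1 ξ)) ∧
    ((a, b) ∈ L1 ξ → (LowerBoundary ξ (a, b) ↔ (a, b) ∈ L2 ξ)) :=
  stmt_16_general ξ hpos hirr a b
end

section
/- Let p and q be distinct primes and set ξ = log q / log p (a positive irrational real number). Assume (a,b) ∈ 𝒩 is a boundary point for ξ, and set α = p^a/q^b. Suppose A = (p^{a₁}/q^{b₁},…,p^{a_N}/q^{b_N}) ∈ ℱ(α) and t > 0 are such that f_A(t) ≤ f_B(t) for every factorization B ∈ ℱ(α). Then (aₙ,bₙ) is a boundary point for ξ for every 1 ≤ n ≤ N. -/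
open Real Finset

/-! Write δ(c, d) = c log p - d log q. Then m(p^c/q^d) = max(c log p, d log q), and (c, d) is a
boundary point iff -log p < δ(c, d) < log q, with all inequalities strict since log q / log p is
irrational. The δ of the factors sum to δ(a, b), which lies in that window. So if
δ(aₙ, bₙ) > log q, some factor has δ(aₘ, bₘ) < 0, and moving one q from the m-th to the n-th
fraction leaves the n-th measure unchanged and strictly lowers the m-th one (a fraction that
becomes 1 is dropped); this contradicts minimality. The case δ(aₙ, bₙ) < -log p is symmetric,
moving one p instead. -/

theorem Nat.pow_ne_pow_of_prime {p q : ℕ} (hp : p.Prime) (hq : q.Prime) (hpq : p ≠ q)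
    {c d : ℕ} (hcd : (c, d) ≠ (0, 0)) : p ^ c ≠ q ^ d := by
  intro h
  have hc := congrArg (fun n => n.factorization p) h
  have hd := congrArg (fun n => n.factorization q) h
  simp only [hp.factorization_pow, hq.factorization_pow, Finsupp.single_apply, hpq,
    Ne.symm hpq, if_true, if_false] at hc hd
  exact hcd (by rw [hc, ← hd])

theorem mul_log_ne_mul_log {p q : ℕ} (hp : p.Prime) (hq : q.Prime) (hpq : p ≠ q)
    {c d : ℕ} (hcd : (c, d) ≠ (0, 0)) : (c : ℝ) * log p ≠ d * log q := by
  rw [← Real.log_pow, ← Real.log_pow]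
  refine fun h => Nat.pow_ne_pow_of_prime hp hq hpq hcd ?_
  exact_mod_cast Real.log_injOn_pos (Set.mem_Ioi.2 (pow_pos (Nat.cast_pos.2 hp.pos) c))
    (Set.mem_Ioi.2 (pow_pos (Nat.cast_pos.2 hq.pos) d)) h

theorem log_max_pow_pow {p q : ℕ} (hp : 0 < p) (hq : 0 < q) (c d : ℕ) :
    Real.log ((max (p ^ c) (q ^ d) : ℕ) : ℝ) = max (c * log p) (d * log q) := by
  have hmono : MonotoneOn Real.log (Set.Ioi 0) := Real.strictMonoOn_log.monotoneOn
  rw [Nat.cast_max, hmono.map_max (by simp; positivity) (by simp; positivity)]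
  push_cast
  rw [Real.log_pow, Real.log_pow]

section Factorization

variable {p q : ℕ}

theorem prod_pow_div_pow {ι : Type*} [Fintype ι] (C D : ι → ℕ) :
    ∏ i, (((p ^ C i : ℕ) : ℚ) / ((q ^ D i : ℕ) : ℚ))
      = (p : ℚ) ^ (∑ i, C i) / (q : ℚ) ^ (∑ i, D i) := by
  push_cast
  rw [Finset.prod_div_distrib, Finset.prod_pow_eq_pow_sum, Finset.prod_pow_eq_pow_sum]

theorem fmeas_pow_pow (hp : 0 < p) (hq : 0 < q) {N : ℕ} (C D : Fin N → ℕ) (t : ℝ) :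
    fmeas (fun n => p ^ C n) (fun n => q ^ D n) t
      = (∑ n, max ((C n : ℝ) * log p) (D n * log q) ^ t) ^ (1 / t) := by
  simp only [fmeas, log_max_pow_pow hp hq]

theorem isFactorization_pow_pow (hp : p.Prime) (hq : q.Prime) (hpq : p ≠ q)
    {N : ℕ} (C D : Fin N → ℕ) (hCD : ∀ n, (C n, D n) ≠ (0, 0)) :
    IsFactorization ((p : ℚ) ^ (∑ n, C n) / (q : ℚ) ^ (∑ n, D n))
      (fun n => p ^ C n) (fun n => q ^ D n) := by
  refine ⟨fun n => pow_pos hp.pos _, fun n => pow_pos hq.pos _, fun n h => ?_,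
    fun _ _ => Nat.Coprime.pow _ _ ((Nat.coprime_primes hp hq).2 hpq), prod_pow_div_pow C D⟩
  rw [div_eq_one_iff_eq (by exact_mod_cast (pow_pos hq.pos _).ne')] at h
  exact Nat.pow_ne_pow_of_prime hp hq hpq (hCD n) (by exact_mod_cast h)

theorem ne_zero_of_isFactorization {α : ℚ} {N : ℕ} {C D : Fin N → ℕ}
    (h : IsFactorization α (fun n => p ^ C n) (fun n => q ^ D n)) (n : Fin N) :
    (C n, D n) ≠ (0, 0) := by
  intro hn
  simp only [Prod.mk.injEq] at hn
  exact h.2.2.1 n (by simp [hn.1, hn.2])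

theorem sum_eq_of_isFactorization (hp : p.Prime) (hq : q.Prime) (hpq : p ≠ q)
    {a b N : ℕ} {C D : Fin N → ℕ}
    (h : IsFactorization ((p : ℚ) ^ a / (q : ℚ) ^ b) (fun n => p ^ C n) (fun n => q ^ D n)) :
    ∑ n, C n = a ∧ ∑ n, D n = b := by
  have hprod := h.2.2.2.2
  rw [prod_pow_div_pow, div_eq_div_iff (by simp [hq.ne_zero]) (by simp [hq.ne_zero])] at hprod
  have hnat : p ^ (∑ n, C n) * q ^ b = p ^ a * q ^ (∑ n, D n) := by exact_mod_cast hprod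
  have hfp := congrArg (fun n => n.factorization p) hnat
  have hfq := congrArg (fun n => n.factorization q) hnat
  simp only [Nat.factorization_mul (pow_ne_zero _ hp.ne_zero) (pow_ne_zero _ hq.ne_zero),
    hp.factorization_pow, hq.factorization_pow, Finsupp.add_apply, Finsupp.single_apply, hpq,
    Ne.symm hpq, if_true, if_false] at hfp hfq
  omega

theorem exists_isFactorization_of_sum (hp : p.Prime) (hq : q.Prime) (hpq : p ≠ q)
    {ι : Type*} [Fintype ι] (C D : ι → ℕ) {t : ℝ} (ht : t ≠ 0) :
    ∃ (M : ℕ) (C' D' : Fin M → ℕ),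
      IsFactorization ((p : ℚ) ^ (∑ i, C i) / (q : ℚ) ^ (∑ i, D i))
        (fun n => p ^ C' n) (fun n => q ^ D' n) ∧
      ∑ n, max ((C' n : ℝ) * log p) (D' n * log q) ^ t
        = ∑ i, max ((C i : ℝ) * log p) (D i * log q) ^ t := by
  classical
  let e := Fintype.equivFin {i // (C i, D i) ≠ (0, 0)}
  have hdrop : ∀ {M : Type} [AddCommMonoid M] (f : ι → M),
      (∀ i, (C i, D i) = (0, 0) → f i = 0) → ∑ n, f (e.symm n) = ∑ i, f i := by
    intro M _ f hf
    have hzero : ∑ i : {i // ¬(C i, D i) ≠ (0, 0)}, f i = 0 :=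
      Finset.sum_eq_zero fun i _ => hf i (not_not.1 i.2)
    rw [e.symm.sum_comp (fun i => f i), ← Fintype.sum_subtype_add_sum_subtype
      (fun i => (C i, D i) ≠ (0, 0)) f, hzero, add_zero]
  have hC := hdrop C (fun i hi => (Prod.mk.inj hi).1)
  have hD := hdrop D (fun i hi => (Prod.mk.inj hi).2)
  refine ⟨_, fun n => C (e.symm n), fun n => D (e.symm n), ?_, ?_⟩
  · rw [← hC, ← hD]
    exact isFactorization_pow_pow hp hq hpq _ _ fun n => (e.symm n).2
  · refine hdrop (fun i => max ((C i : ℝ) * log p) (D i * log q) ^ t) fun i hi => ?_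
    simp only [Prod.mk.injEq] at hi
    simp [hi.1, hi.2, Real.zero_rpow ht]

end Factorization

theorem sum_rpow_le_of_forall_fmeas_le {p q : ℕ} (hp : p.Prime) (hq : q.Prime) (hpq : p ≠ q)
    {a b N : ℕ} {A B : Fin N → ℕ} {t : ℝ} (ht : 0 < t)
    (hmin : ∀ (M : ℕ) (r s : Fin M → ℕ), IsFactorization ((p : ℚ) ^ a / (q : ℚ) ^ b) r s →
      fmeas (fun n => p ^ A n) (fun n => q ^ B n) t ≤ fmeas r s t)
    {ι : Type*} [Fintype ι] (C D : ι → ℕ) (hC : ∑ i, C i = a) (hD : ∑ i, D i = b) :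
    ∑ n, max ((A n : ℝ) * log p) (B n * log q) ^ t
      ≤ ∑ i, max ((C i : ℝ) * log p) (D i * log q) ^ t := by
  obtain ⟨M, C', D', hfact, hsum⟩ := exists_isFactorization_of_sum hp hq hpq C D ht.ne'
  subst hC hD
  have h := hmin M _ _ hfact
  rw [fmeas_pow_pow hp.pos hq.pos, fmeas_pow_pow hp.pos hq.pos, hsum] at h
  exact (Real.rpow_le_rpow_iff (by positivity) (by positivity) (one_div_pos.2 ht)).1 h

theorem sum_rpow_lt_sum_rpow {ι : Type*} [Fintype ι] {f g : ι → ℝ} (hf : ∀ i, 0 ≤ f i)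
    (hfg : ∀ i, f i ≤ g i) {m : ι} (hm : f m < g m) {t : ℝ} (ht : 0 < t) :
    ∑ i, f i ^ t < ∑ i, g i ^ t :=
  Finset.sum_lt_sum (fun i _ => Real.rpow_le_rpow (hf i) (hfg i) ht.le)
    ⟨m, Finset.mem_univ m, Real.rpow_lt_rpow (hf m) hm ht⟩

theorem exists_sum_rpow_lt_of_lt_sub {ι : Type*} [Fintype ι] [DecidableEq ι] {u v t : ℝ}
    (hu : 0 ≤ u) (hv : 0 < v) (ht : 0 < t) (A B : ι → ℕ) {n : ι}
    (hn : v < A n * u - B n * v) (hsum : ∑ i, ((A i : ℝ) * u - B i * v) < A n * u - B n * v) :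
    ∃ B' : ι → ℕ, ∑ i, B' i = ∑ i, B i ∧
      ∑ i, max ((A i : ℝ) * u) (B' i * v) ^ t < ∑ i, max ((A i : ℝ) * u) (B i * v) ^ t := by
  obtain ⟨m, hm⟩ : ∃ m, (A m : ℝ) * u < B m * v := by
    by_contra! h
    exact hsum.not_ge (Finset.single_le_sum (fun i _ => sub_nonneg.2 (h i)) (Finset.mem_univ n))
  have hmn : m ≠ n := by rintro rfl; linarith
  have hBm : 1 ≤ B m := by
    by_contra! h
    rw [Nat.lt_one_iff.1 h, Nat.cast_zero, zero_mul] at hm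
    exact hm.not_ge (by positivity)
  let B' : ι → ℕ := fun i => B i + (if i = n then 1 else 0) - (if i = m then 1 else 0)
  have hB'm : B' m = B m - 1 := by simp [B', hmn]
  have hB'n : B' n = B n + 1 := by simp [B', hmn.symm]
  have hB' : ∀ i, i ≠ m → i ≠ n → B' i = B i := fun i him hin => by simp [B', him, hin]
  have hcost_m : max ((A m : ℝ) * u) (B' m * v) < max ((A m : ℝ) * u) (B m * v) := by
    rw [max_eq_right hm.le, hB'm, Nat.cast_sub hBm, Nat.cast_one]
    exact max_lt hm (by linarith)
  have hcost_n : max ((A n : ℝ) * u) (B' n * v) = max ((A n : ℝ) * u) (B n * v) := by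
    rw [hB'n, Nat.cast_succ, max_eq_left (by linarith), max_eq_left (by linarith)]
  refine ⟨B', ?_, sum_rpow_lt_sum_rpow (fun i => ?_) (fun i => ?_) (m := m) ?_ ht⟩
  · have hshift : ∀ i, B' i + (if i = m then 1 else 0) = B i + (if i = n then 1 else 0) := by
      intro i
      by_cases him : i = m
      · subst him; simp [hB'm, hmn]; omega
      by_cases hin : i = n
      · subst hin; simp [hB'n, him]
      · simp [hB' i him hin, him, hin]
    have := Finset.sum_congr rfl fun i (_ : i ∈ Finset.univ) => hshift i
    simpa [Finset.sum_add_distrib] using this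
  · exact le_max_of_le_right (by positivity)
  · by_cases him : i = m
    · exact him ▸ hcost_m.le
    by_cases hin : i = n
    · exact hin ▸ hcost_n.le
    · rw [hB' i him hin]
  · exact hcost_m

theorem exists_sum_rpow_lt_of_sub_lt_neg {ι : Type*} [Fintype ι] [DecidableEq ι] {u v t : ℝ}
    (hu : 0 < u) (hv : 0 ≤ v) (ht : 0 < t) (A B : ι → ℕ) {n : ι}
    (hn : A n * u - B n * v < -u) (hsum : A n * u - B n * v < ∑ i, ((A i : ℝ) * u - B i * v)) :
    ∃ A' : ι → ℕ, ∑ i, A' i = ∑ i, A i ∧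
      ∑ i, max ((A' i : ℝ) * u) (B i * v) ^ t < ∑ i, max ((A i : ℝ) * u) (B i * v) ^ t := by
  have hsum' : ∑ i, ((B i : ℝ) * v - A i * u) < B n * v - A n * u := by
    rw [Finset.sum_sub_distrib] at hsum ⊢
    linarith
  simpa only [max_comm ((B _ : ℝ) * v)] using
    exists_sum_rpow_lt_of_lt_sub hv hu ht B A (by linarith) hsum'

theorem boundary_div_iff {u v : ℝ} (hu : 0 < u) (c d : ℕ) :
    Boundary (v / u) (c, d) ↔
      (0 < c * u - d * v ∧ c * u - d * v < v) ∨ (-u < c * u - d * v ∧ c * u - d * v < 0) := by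
  simp only [Boundary, UpperBoundary, LowerBoundary, Uset, Lset, Set.mem_ofPred_eq, ne_eq,
    Prod.mk.injEq, Nat.add_one_ne_zero, and_false, false_and, not_false_eq_true, true_and,
    Nat.cast_add, Nat.cast_one, mul_div_assoc', div_lt_iff₀ hu, lt_div_iff₀ hu]
  have hcd : (d : ℝ) * v < c * u ∨ (c : ℝ) * u < d * v → ¬(c = 0 ∧ d = 0) := by
    rintro h ⟨rfl, rfl⟩
    simp at h
  constructor
  · rintro (⟨⟨-, h1⟩, h2⟩ | ⟨⟨-, h1⟩, h2⟩)
    · exact Or.inl ⟨by linarith, by linarith⟩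
    · exact Or.inr ⟨by linarith, by linarith⟩
  · rintro (⟨h1, h2⟩ | ⟨h1, h2⟩)
    · exact Or.inl ⟨⟨hcd (Or.inl (by linarith)), by linarith⟩, by linarith⟩
    · exact Or.inr ⟨⟨hcd (Or.inr (by linarith)), by linarith⟩, by linarith⟩

theorem lt_sub_or_sub_lt_of_not_boundary {u v : ℝ} (hu : 0 < u)
    (hirr : ∀ c d : ℕ, (c, d) ≠ (0, 0) → (c : ℝ) * u ≠ d * v) {c d : ℕ} (hcd : (c, d) ≠ (0, 0))
    (h : ¬Boundary (v / u) (c, d)) : v < c * u - d * v ∨ c * u - d * v < -u := by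
  have h0 := hirr c d hcd
  have h1 := hirr c (d + 1) (by simp)
  have h2 := hirr (c + 1) d (by simp)
  push_cast at h1 h2
  rw [boundary_div_iff hu] at h
  by_contra! hfar
  rcases h0.lt_or_gt with h0 | h0
  · exact h (Or.inr ⟨lt_of_le_of_ne hfar.2 (by intro h; apply h2; linarith), by linarith⟩)
  · exact h (Or.inl ⟨by linarith, lt_of_le_of_ne hfar.1 (by intro h; apply h1; linarith)⟩)

/-- Lemma `BoundaryPointFactorization`: if `(a,b)` is a boundary point
for `ξ = log q / log p` and a factorization of `p^a/q^b` attains the infimum in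
`m_t(p^a/q^b)` over `ℱ(p^a/q^b)` for some `t > 0`, then every `(aₙ,bₙ)` is a boundary
point for `ξ`. -/
theorem stmt_17 (p q : ℕ) (hp : p.Prime) (hq : q.Prime) (hpq : p ≠ q)
    (ξ : ℝ) (hξ : ξ = Real.log q / Real.log p)
    (a b : ℕ) (hbd : Boundary ξ (a, b))
    (N : ℕ) (A B : Fin N → ℕ)
    (hfact : IsFactorization ((p : ℚ) ^ a / (q : ℚ) ^ b)
      (fun n => p ^ A n) (fun n => q ^ B n))
    (t : ℝ) (ht : 0 < t)
    (hmin : ∀ (M : ℕ) (r s : Fin M → ℕ),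
      IsFactorization ((p : ℚ) ^ a / (q : ℚ) ^ b) r s →
      fmeas (fun n => p ^ A n) (fun n => q ^ B n) t ≤ fmeas r s t) :
    ∀ n : Fin N, Boundary ξ (A n, B n) := by
  subst hξ
  have hu : 0 < log p := Real.log_pos (by exact_mod_cast hp.one_lt)
  have hv : 0 < log q := Real.log_pos (by exact_mod_cast hq.one_lt)
  obtain ⟨hA, hB⟩ := sum_eq_of_isFactorization hp hq hpq hfact
  have hsum : ∑ i, ((A i : ℝ) * log p - B i * log q) = a * log p - b * log q := by
    rw [Finset.sum_sub_distrib, ← Finset.sum_mul, ← Finset.sum_mul, ← hA, ← hB,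
      Nat.cast_sum, Nat.cast_sum]
  have htotal : -log p < a * log p - b * log q ∧ a * log p - b * log q < log q := by
    rcases (boundary_div_iff hu a b).1 hbd with h | h <;> constructor <;> linarith [h.1, h.2]
  intro n
  by_contra hn
  rcases lt_sub_or_sub_lt_of_not_boundary hu (fun c d => mul_log_ne_mul_log hp hq hpq)
    (ne_zero_of_isFactorization hfact n) hn with hfar | hfar
  · obtain ⟨B', hB', hlt⟩ := exists_sum_rpow_lt_of_lt_sub hu.le hv ht A B hfar (by linarith)
    exact hlt.not_ge (sum_rpow_le_of_forall_fmeas_le hp hq hpq ht hmin A B' hA (hB'.trans hB))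
  · obtain ⟨A', hA', hlt⟩ := exists_sum_rpow_lt_of_sub_lt_neg hu hv.le ht A B hfar (by linarith)
    exact hlt.not_ge (sum_rpow_le_of_forall_fmeas_le hp hq hpq ht hmin A' B (hA'.trans hA) hB)
end

section
/- Let ξ > 1 be an irrational real number with simple continued fraction expansion ξ = [x₀; x₁, x₂, x₃, …], and let (a,b) ∈ 𝒩 with (a,b) ∉ {(1,0), (x₀,1)}. Then (a,b) is an upper or lower best approximation for ξ if and only if gcd(a,b) = 1 and there exist an integer n ≥ 1 and an integer x with 1 ≤ x ≤ xₙ such that a/b = [x₀; x₁, x₂, …, x_{n-1}, x]. -/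
open Real Finset

/-- The Gauss-map iterates of `ξ`: `cfRem ξ 0 = ξ` and
`cfRem ξ (n+1) = 1 / (cfRem ξ n - ⌊cfRem ξ n⌋)`. -/
noncomputable def cfRem (ξ : ℝ) : ℕ → ℝ
  | 0 => ξ
  | n + 1 => (cfRem ξ n - (⌊cfRem ξ n⌋₊ : ℝ))⁻¹

/-- The partial quotients `xₙ` of the continued fraction expansion
`ξ = [x₀; x₁, x₂, …]` of an irrational `ξ > 1`. -/
noncomputable def cfDigit (ξ : ℝ) (n : ℕ) : ℕ := ⌊cfRem ξ n⌋₊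

/-- The value of the finite continued fraction `[c₀; c₁, …, c_k]`. -/
def cfVal : List ℕ → ℚ
  | [] => 0
  | [c] => (c : ℚ)
  | c :: rest => (c : ℚ) + (cfVal rest)⁻¹

/-!
With `x₀ = ⌊ξ⌋` and `ξ' = (ξ - x₀)⁻¹`, the map `(b, q) ↦ (x₀b + q, b)` carries `ℒ(ξ')` onto `𝒰(ξ)`
and `𝒰(ξ')` onto `{(a, b) ∈ ℒ(ξ) : a ≥ x₀b}`, reversing the order of fractions and swapping
numerators with denominators; so it matches `𝒰₂(ξ)` with `ℒ₁(ξ')` and `ℒ₂(ξ)` with `𝒰₁(ξ')`.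
On coprime pairs `𝒰₁ = 𝒰₂`, and `ℒ₁ = ℒ₂` away from denominator `1`. Hence the best approximations
for `ξ` other than `(x₀, 1)` are the images of the pairs `(x, 1)` with `x ≤ x₁` and of the best
approximations for `ξ'`. The fractions `[x₀; …, x_{n-1}, x]` obey the same recursion, and induction
on the numerator finishes the proof.
-/

lemma cfRem_succ (ξ : ℝ) : ∀ n, cfRem ξ (n + 1) = cfRem (cfRem ξ 1) n
  | 0 => rfl
  | n + 1 => by rw [cfRem, cfRem_succ ξ n, ← cfRem]

lemma cfDigit_succ (ξ : ℝ) (n : ℕ) : cfDigit ξ (n + 1) = cfDigit (cfRem ξ 1) n := by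
  rw [cfDigit, cfRem_succ, cfDigit]

lemma natFloor_lt_self {ξ : ℝ} (h0 : 0 ≤ ξ) (hirr : Irrational ξ) : (⌊ξ⌋₊ : ℝ) < ξ :=
  (Nat.floor_le h0).lt_of_ne (hirr.ne_nat _).symm

lemma one_lt_cfRem_one {ξ : ℝ} (h1 : 1 < ξ) (hirr : Irrational ξ) : 1 < cfRem ξ 1 :=
  show 1 < (ξ - ⌊ξ⌋₊)⁻¹ from one_lt_inv_iff₀.mpr
    ⟨sub_pos.mpr (natFloor_lt_self (by linarith) hirr), by linarith [Nat.lt_floor_add_one ξ]⟩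

lemma irrational_cfRem_one {ξ : ℝ} (hirr : Irrational ξ) : Irrational (cfRem ξ 1) :=
  (hirr.sub_natCast _).inv

lemma one_le_cfDigit {ξ : ℝ} (h1 : 1 < ξ) (hirr : Irrational ξ) (n : ℕ) : 1 ≤ cfDigit ξ n := by
  induction n generalizing ξ with
  | zero => exact Nat.le_floor (by exact_mod_cast h1.le)
  | succ n ih => rw [cfDigit_succ]; exact ih (one_lt_cfRem_one h1 hirr) (irrational_cfRem_one hirr)

/-- Numerator and denominator of `[c₀; c₁, …, c_k]`; the empty list gives `(1, 0)`, i.e. `∞`. -/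
def cfPair : List ℕ → ℕ × ℕ
  | [] => (1, 0)
  | c :: l => (c * (cfPair l).1 + (cfPair l).2, (cfPair l).1)

lemma one_le_cfPair_fst : ∀ {l : List ℕ}, (∀ c ∈ l, 1 ≤ c) → 1 ≤ (cfPair l).1
  | [], _ => le_rfl
  | c :: l, h => by
    have hc := h c List.mem_cons_self
    have hl := one_le_cfPair_fst fun d hd => h d (List.mem_cons_of_mem c hd)
    simp only [cfPair]
    nlinarith

lemma one_le_cfPair_snd {l : List ℕ} (h : ∀ c ∈ l, 1 ≤ c) (hne : l ≠ []) :
    1 ≤ (cfPair l).2 := by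
  obtain ⟨c, l, rfl⟩ := List.exists_cons_of_ne_nil hne
  exact one_le_cfPair_fst fun d hd => h d (List.mem_cons_of_mem c hd)

lemma coprime_cfPair : ∀ l : List ℕ, Nat.Coprime (cfPair l).1 (cfPair l).2
  | [] => Nat.coprime_one_left 0
  | c :: l => by
    rw [cfPair, Nat.add_comm]
    exact (Nat.coprime_add_mul_right_left _ _ c).mpr (coprime_cfPair l).symm

lemma cfVal_cons (c : ℕ) (l : List ℕ) : cfVal (c :: l) = c + (cfVal l)⁻¹ := by
  cases l <;> simp [cfVal]

lemma cfVal_eq_cfPair_div : ∀ {l : List ℕ}, (∀ c ∈ l, 1 ≤ c) →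
    cfVal l = ((cfPair l).1 : ℚ) / (cfPair l).2
  | [], _ => by simp [cfVal, cfPair]
  | c :: l, h => by
    have hl : ∀ d ∈ l, 1 ≤ d := fun d hd => h d (List.mem_cons_of_mem c hd)
    have hp : ((cfPair l).1 : ℚ) ≠ 0 := by have := one_le_cfPair_fst hl; positivity
    rw [cfVal_cons, cfVal_eq_cfPair_div hl, inv_div, cfPair]
    push_cast
    field_simp

lemma eq_of_div_eq_div_of_coprime {a b c d : ℕ} (hb : 0 < b) (hd : 0 < d)
    (hab : a.Coprime b) (hcd : c.Coprime d) (h : (a : ℚ) / b = c / d) : (a, b) = (c, d) := by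
  obtain ⟨hac, hbd⟩ := Rat.div_int_inj (a := a) (b := b) (c := c) (d := d)
    (by exact_mod_cast hb) (by exact_mod_cast hd) hab hcd (by push_cast; exact h)
  simp only [Prod.mk.injEq]
  omega

lemma eq_cfPair_iff_div_eq_cfVal {a b : ℕ} {l : List ℕ} (hab : a.Coprime b) (hb : 1 ≤ b)
    (h : ∀ c ∈ l, 1 ≤ c) (hne : l ≠ []) : (a, b) = cfPair l ↔ (a : ℚ) / b = cfVal l := by
  rw [cfVal_eq_cfPair_div h]
  refine ⟨fun hp => by rw [← hp], eq_of_div_eq_div_of_coprime hb ?_ hab (coprime_cfPair l)⟩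
  exact one_le_cfPair_snd h hne

noncomputable def cfPrefix (ξ : ℝ) (n : ℕ) : List ℕ := List.ofFn fun i : Fin n => cfDigit ξ i

lemma cfPrefix_succ (ξ : ℝ) (n : ℕ) :
    cfPrefix ξ (n + 1) = cfDigit ξ 0 :: cfPrefix (cfRem ξ 1) n := by
  simp only [cfPrefix, List.ofFn_succ, Fin.val_zero, Fin.val_succ, cfDigit_succ]

lemma one_le_of_mem_cfPrefix_append {ξ : ℝ} (h1 : 1 < ξ) (hirr : Irrational ξ) {n x : ℕ}
    (hx : 1 ≤ x) : ∀ c ∈ cfPrefix ξ n ++ [x], 1 ≤ c := by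
  simp only [cfPrefix, List.mem_append, List.mem_ofFn, List.mem_singleton]
  rintro c (⟨i, rfl⟩ | rfl)
  · exact one_le_cfDigit h1 hirr i
  · exact hx

lemma pos_of_mem_Lset {ξ : ℝ} {m n : ℕ} (h : (m, n) ∈ Lset ξ) : 0 < n := by
  obtain ⟨-, h⟩ := h
  rcases Nat.eq_zero_or_pos n with rfl | hn
  · simp only [Nat.cast_zero, zero_mul] at h
    exact absurd h (Nat.cast_nonneg m).not_gt
  · exact hn

lemma mem_U2_of_mem_U1 {ξ : ℝ} {a b : ℕ} (h : (a, b) ∈ U1 ξ) : (a, b) ∈ U2 ξ := by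
  refine ⟨h.1, fun ⟨m, n⟩ hy hn => ?_⟩
  rcases le_or_gt m a with hm | hm
  · exact h.2 (m, n) hy hm
  · calc a * n ≤ a * b := Nat.mul_le_mul_left a hn
      _ ≤ m * b := Nat.mul_le_mul_right b hm.le

/-- An element `(m, n)` of `𝒰(ξ)` with `m ≤ a` and `n > b` would force `m = a` and make
`(a - 1, b)` an element of `𝒰(ξ)`. -/
lemma mem_U1_of_mem_U2 {ξ : ℝ} (hξ : 1 ≤ ξ) {a b : ℕ} (hb : 1 ≤ b) (h : (a, b) ∈ U2 ξ) :
    (a, b) ∈ U1 ξ := by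
  refine ⟨h.1, fun ⟨m, n⟩ hy hm => ?_⟩
  rcases le_or_gt n b with hn | hn
  · exact h.2 (m, n) hy hn
  exfalso
  have hnb : (b : ℝ) + 1 ≤ n := by exact_mod_cast hn
  have hbm : (b : ℝ) * ξ + 1 < m := by nlinarith [hy.2]
  have hmb : ((m, b) : ℕ × ℕ) ∈ Uset ξ := ⟨by simp; omega, by simp only; linarith⟩
  have ham : a = m := le_antisymm (Nat.le_of_mul_le_mul_right (h.2 _ hmb le_rfl) hb) hm
  subst ham
  have ha : 1 ≤ a := by
    have : (0 : ℝ) ≤ b * ξ := by positivity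
    exact_mod_cast (show (1 : ℝ) ≤ a by linarith)
  have ha1 : ((a - 1, b) : ℕ × ℕ) ∈ Uset ξ := by
    refine ⟨by simp; omega, ?_⟩
    simp only
    rw [Nat.cast_sub ha, Nat.cast_one]
    linarith
  have := Nat.le_of_mul_le_mul_right (h.2 (a - 1, b) ha1 le_rfl) hb
  omega

lemma mem_L1_of_mem_L2 {ξ : ℝ} {a b : ℕ} (h : (a, b) ∈ L2 ξ) : (a, b) ∈ L1 ξ := by
  refine ⟨h.1, fun ⟨m, n⟩ hy hm => ?_⟩
  rcases le_or_gt n b with hn | hn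
  · exact h.2 (m, n) hy hn
  · calc m * b ≤ a * b := Nat.mul_le_mul_right b hm
      _ ≤ a * n := Nat.mul_le_mul_left a hn.le

lemma exists_mul_eq_mul_add_one {a b : ℕ} (hab : a.Coprime b) (hb : 2 ≤ b) :
    ∃ m n, 0 < n ∧ n < b ∧ m * b = a * n + 1 := by
  obtain ⟨u, hub, hu⟩ := Nat.exists_mul_mod_eq_one_of_coprime hab (by omega)
  have hu0 : 0 < u := by
    rcases Nat.eq_zero_or_pos u with rfl | h
    · simp at hu
    · exact h
  refine ⟨a - a * u / b, b - u, by omega, by omega, ?_⟩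
  have hdiv := Nat.div_add_mod (a * u) b
  have hau : a * u ≤ a * b := Nat.mul_le_mul_left a hub.le
  rw [Nat.sub_mul, Nat.mul_sub, Nat.mul_comm (a * u / b)]
  omega

/-- If `bη > a + 1`, the solution of `mb = an + 1` with `0 < n < b` gives an element `(m, n)`
of `ℒ(η)` with `m ≤ a` and `m/n > a/b`. -/
lemma mul_le_add_one_of_mem_L1 {η : ℝ} {a b : ℕ} (hab : a.Coprime b) (hb : 2 ≤ b)
    (h : (a, b) ∈ L1 η) : (b : ℝ) * η ≤ a + 1 := by
  by_contra! hlt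
  obtain ⟨m, n, hn0, hnb, hmn⟩ := exists_mul_eq_mul_add_one hab hb
  have ha : 1 ≤ a := by
    rcases Nat.eq_zero_or_pos a with rfl | ha
    · simp at hab; omega
    · exact ha
  have hma : m ≤ a := Nat.le_of_mul_le_mul_right (by nlinarith) (by omega : 0 < b)
  have hL : ((m, n) : ℕ × ℕ) ∈ Lset η := by
    refine ⟨by simp; omega, ?_⟩
    have hmn' : (m : ℝ) * b = a * n + 1 := by exact_mod_cast hmn
    have hn1 : (1 : ℝ) ≤ n := by exact_mod_cast hn0
    have hb0 : (0 : ℝ) < b := by positivity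
    simp only
    nlinarith
  have := h.2 _ hL hma
  simp only at this
  omega

lemma mem_L2_of_mem_L1 {η : ℝ} {a b : ℕ} (hab : a.Coprime b) (hb : 2 ≤ b)
    (h : (a, b) ∈ L1 η) : (a, b) ∈ L2 η := by
  have hbη := mul_le_add_one_of_mem_L1 hab hb h
  refine ⟨h.1, fun ⟨m, n⟩ hy hn => ?_⟩
  rcases le_or_gt m a with hm | hm
  · exact h.2 (m, n) hy hm
  exfalso
  have ha : 1 ≤ a := by
    rcases Nat.eq_zero_or_pos a with rfl | ha
    · simp at hab; omega
    · exact ha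
  have hma : (a : ℝ) + 1 ≤ m := by exact_mod_cast hm
  have hn' : (n : ℝ) ≤ b := by exact_mod_cast hn
  have han : ((a, n) : ℕ × ℕ) ∈ Lset η := ⟨by simp; omega, by simp only; linarith [hy.2]⟩
  have hbn : b ≤ n := Nat.le_of_mul_le_mul_left (h.2 _ han le_rfl) ha
  have hmη : (m : ℝ) < b * η := by
    have := hy.2
    rwa [le_antisymm hn hbn] at this
  linarith

lemma mem_L1_iff {η : ℝ} {p q : ℕ} (hpq : p.Coprime q) (hq : 1 ≤ q) :
    (p, q) ∈ L1 η ↔ (q = 1 ∧ (p : ℝ) < η) ∨ (p, q) ∈ L2 η := by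
  constructor
  · intro h
    rcases hq.eq_or_lt with rfl | hq
    · exact Or.inl ⟨rfl, by simpa using h.1.2⟩
    · exact Or.inr (mem_L2_of_mem_L1 hpq hq h)
  · rintro (⟨rfl, hp⟩ | h)
    · refine ⟨⟨by simp, by simpa using hp⟩, fun ⟨m, n⟩ hy hm => ?_⟩
      simpa using Nat.mul_le_mul hm (pos_of_mem_Lset hy)
    · exact mem_L1_of_mem_L2 h

section Shift

variable {ξ : ℝ} {k : ℕ}

lemma shift_ne_zero_iff {p q : ℕ} : ((k * p + q, p) : ℕ × ℕ) ≠ (0, 0) ↔ (p, q) ≠ (0, 0) := by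
  simp only [ne_eq, Prod.mk.injEq, Nat.add_eq_zero_iff, mul_eq_zero]
  tauto

lemma shift_mul_le_iff (p q n s : ℕ) : (k * p + q) * n ≤ (k * n + s) * p ↔ q * n ≤ s * p := by
  rw [show (k * p + q) * n = k * p * n + q * n by ring,
    show (k * n + s) * p = k * p * n + s * p by ring]
  exact Nat.add_le_add_iff_left

variable (hk : (k : ℝ) < ξ)
include hk

lemma mem_Uset_shift_iff (p q : ℕ) :
    ((k * p + q, p) : ℕ × ℕ) ∈ Uset ξ ↔ (p, q) ∈ Lset (ξ - k)⁻¹ := by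
  refine and_congr shift_ne_zero_iff ?_
  simp only [← div_eq_mul_inv, lt_div_iff₀ (sub_pos.mpr hk)]
  push_cast
  constructor <;> intro h <;> linarith

lemma mem_Lset_shift_iff (p q : ℕ) :
    ((k * p + q, p) : ℕ × ℕ) ∈ Lset ξ ↔ (p, q) ∈ Uset (ξ - k)⁻¹ := by
  refine and_congr shift_ne_zero_iff ?_
  simp only [← div_eq_mul_inv, div_lt_iff₀ (sub_pos.mpr hk)]
  push_cast
  constructor <;> intro h <;> linarith

lemma exists_eq_shift_of_mem_Uset {m n : ℕ} (h : (m, n) ∈ Uset ξ) : ∃ s, m = k * n + s := by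
  refine ⟨m - k * n, (Nat.add_sub_of_le ?_).symm⟩
  have : (k : ℝ) * n ≤ m := by nlinarith [h.2, (Nat.cast_nonneg n : (0 : ℝ) ≤ n)]
  exact_mod_cast this

lemma mem_U2_shift_iff (p q : ℕ) :
    ((k * p + q, p) : ℕ × ℕ) ∈ U2 ξ ↔ (p, q) ∈ L1 (ξ - k)⁻¹ := by
  refine and_congr (mem_Uset_shift_iff hk p q) ⟨fun h ⟨n, s⟩ hy hn => ?_, fun h ⟨m, n⟩ hy hn => ?_⟩
  · have := h _ ((mem_Uset_shift_iff hk n s).mpr hy) hn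
    simp only [shift_mul_le_iff] at this
    simp only
    linarith
  · obtain ⟨s, rfl⟩ := exists_eq_shift_of_mem_Uset hk hy
    have := h (n, s) ((mem_Uset_shift_iff hk n s).mp hy) hn
    simp only [shift_mul_le_iff] at this ⊢
    linarith

lemma mem_L2_shift_iff (p q : ℕ) :
    ((k * p + q, p) : ℕ × ℕ) ∈ L2 ξ ↔ (p, q) ∈ U1 (ξ - k)⁻¹ := by
  refine and_congr (mem_Lset_shift_iff hk p q) ⟨fun h ⟨n, s⟩ hy hn => ?_, fun h ⟨m, n⟩ hy hn => ?_⟩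
  · have := h _ ((mem_Lset_shift_iff hk n s).mpr hy) hn
    simp only [shift_mul_le_iff] at this ⊢
    linarith
  · simp only at hn ⊢
    rcases le_or_gt m (k * n) with hm | hm
    · calc m * p ≤ k * n * p := Nat.mul_le_mul_right p hm
        _ ≤ (k * p + q) * n := by nlinarith
    · obtain ⟨s, rfl⟩ : ∃ s, m = k * n + s := ⟨m - k * n, by omega⟩
      have := h (n, s) ((mem_Lset_shift_iff hk n s).mp hy) hn
      simp only [shift_mul_le_iff] at this ⊢
      linarith

end Shift

section BestApprox

variable {ξ : ℝ} (h1 : 1 < ξ) (hirr : Irrational ξ)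
include h1 hirr

lemma BestApprox.natFloor_mul_le {a b : ℕ} (h : BestApprox ξ (a, b)) : ⌊ξ⌋₊ * b ≤ a := by
  have hk : (⌊ξ⌋₊ : ℝ) < ξ := natFloor_lt_self (by linarith) hirr
  rcases Nat.eq_zero_or_pos b with rfl | hb
  · simp
  rcases h with ⟨-, hU, -⟩ | ⟨-, -, hL⟩
  · obtain ⟨s, rfl⟩ := exists_eq_shift_of_mem_Uset hk hU
    omega
  · simpa using hL (⌊ξ⌋₊, 1) ⟨by simp, by simpa using hk⟩ hb

lemma bestApprox_shift_iff {p q : ℕ} (hp : 1 ≤ p) (hq : 1 ≤ q) :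
    BestApprox ξ (cfDigit ξ 0 * p + q, p) ↔
      (q = 1 ∧ p ≤ cfDigit ξ 1) ∨ BestApprox (cfRem ξ 1) (p, q) := by
  have hk : (⌊ξ⌋₊ : ℝ) < ξ := natFloor_lt_self (by linarith) hirr
  have hGset : ((cfDigit ξ 0 * p + q, p) : ℕ × ℕ) ∈ Gset ↔ (p, q) ∈ Gset := by
    refine and_congr shift_ne_zero_iff ?_
    exact (Nat.coprime_mul_right_add_left _ _ _).trans Nat.coprime_comm
  have hfloor : (p : ℝ) < cfRem ξ 1 ↔ p ≤ cfDigit ξ 1 := by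
    rw [cfDigit, Nat.le_floor_iff (by linarith [one_lt_cfRem_one h1 hirr])]
    exact ⟨le_of_lt, fun h => h.lt_of_ne ((irrational_cfRem_one hirr).ne_nat p).symm⟩
  have hU : ((cfDigit ξ 0 * p + q, p) : ℕ × ℕ) ∈ U1 ξ ↔ (p, q) ∈ L1 (cfRem ξ 1) :=
    ⟨fun h => (mem_U2_shift_iff hk p q).mp (mem_U2_of_mem_U1 h),
      fun h => mem_U1_of_mem_U2 h1.le hp ((mem_U2_shift_iff hk p q).mpr h)⟩
  have hL : ((cfDigit ξ 0 * p + q, p) : ℕ × ℕ) ∈ L2 ξ ↔ (p, q) ∈ U1 (cfRem ξ 1) :=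
    mem_L2_shift_iff hk p q
  have hG1 : q = 1 → (p, q) ∈ Gset := by
    rintro rfl
    exact ⟨by simp, Nat.coprime_one_right p⟩
  simp only [BestApprox, Set.mem_inter_iff, hGset, hU, hL]
  constructor
  · rintro (⟨hG, hL1⟩ | ⟨hG, hU1⟩)
    · rcases (mem_L1_iff hG.2 hq).mp hL1 with ⟨rfl, hp⟩ | hL2
      · exact Or.inl ⟨rfl, hfloor.mp hp⟩
      · exact Or.inr (Or.inr ⟨hG, hL2⟩)
    · exact Or.inr (Or.inl ⟨hG, hU1⟩)
  · rintro (⟨rfl, hp⟩ | ⟨hG, hU1⟩ | ⟨hG, hL2⟩)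
    · exact Or.inl ⟨hG1 rfl, (mem_L1_iff (Nat.coprime_one_right p) le_rfl).mpr
        (Or.inl ⟨rfl, hfloor.mpr hp⟩)⟩
    · exact Or.inr ⟨hG, hU1⟩
    · exact Or.inl ⟨hG, mem_L1_of_mem_L2 hL2⟩

end BestApprox

/-- `(a, b)` is the pair of `[x₀; x₁, …, x_{n-1}, x]` for some `n ≥ 1` and `1 ≤ x ≤ xₙ`. -/
def IsSemiconvergent (ξ : ℝ) (ab : ℕ × ℕ) : Prop :=
  ∃ n, 1 ≤ n ∧ ∃ x, 1 ≤ x ∧ x ≤ cfDigit ξ n ∧ ab = cfPair (cfPrefix ξ n ++ [x])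

lemma isSemiconvergent_iff {ξ : ℝ} {ab : ℕ × ℕ} :
    IsSemiconvergent ξ ab ↔ ∃ m x, 1 ≤ x ∧ x ≤ cfDigit (cfRem ξ 1) m ∧
      ab = cfPair (cfDigit ξ 0 :: (cfPrefix (cfRem ξ 1) m ++ [x])) := by
  constructor
  · rintro ⟨n, hn, x, hx1, hx, rfl⟩
    obtain ⟨m, rfl⟩ : ∃ m, n = m + 1 := ⟨n - 1, by omega⟩
    rw [cfDigit_succ] at hx
    exact ⟨m, x, hx1, hx, by rw [cfPrefix_succ, List.cons_append]⟩
  · rintro ⟨m, x, hx1, hx, rfl⟩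
    exact ⟨m + 1, by omega, x, hx1, by rwa [cfDigit_succ], by rw [cfPrefix_succ, List.cons_append]⟩

lemma IsSemiconvergent.natFloor_mul_lt {ξ : ℝ} (h1 : 1 < ξ) (hirr : Irrational ξ) {a b : ℕ}
    (h : IsSemiconvergent ξ (a, b)) : cfDigit ξ 0 * b < a := by
  obtain ⟨m, x, hx1, -, hab⟩ := isSemiconvergent_iff.mp h
  have hq : 1 ≤ (cfPair (cfPrefix (cfRem ξ 1) m ++ [x])).2 := one_le_cfPair_snd
    (one_le_of_mem_cfPrefix_append (one_lt_cfRem_one h1 hirr) (irrational_cfRem_one hirr) hx1)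
    (by simp)
  simp only [cfPair, Prod.mk.injEq] at hab
  obtain ⟨rfl, rfl⟩ := hab
  exact Nat.lt_add_of_pos_right hq

lemma shift_eq_cfPair_cons_iff (c p q : ℕ) (l : List ℕ) :
    ((c * p + q, p) : ℕ × ℕ) = cfPair (c :: l) ↔ (p, q) = cfPair l := by
  simp only [cfPair, Prod.ext_iff]
  constructor
  · rintro ⟨h, rfl⟩
    exact ⟨rfl, by omega⟩
  · rintro ⟨rfl, rfl⟩
    exact ⟨rfl, rfl⟩

lemma isSemiconvergent_shift_iff (ξ : ℝ) (p q : ℕ) :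
    IsSemiconvergent ξ (cfDigit ξ 0 * p + q, p) ↔
      (q = 1 ∧ 1 ≤ p ∧ p ≤ cfDigit ξ 1) ∨ IsSemiconvergent (cfRem ξ 1) (p, q) := by
  rw [isSemiconvergent_iff]
  simp only [shift_eq_cfPair_cons_iff]
  constructor
  · rintro ⟨m, x, hx1, hx, hpq⟩
    rcases Nat.eq_zero_or_pos m with rfl | hm
    · simp only [cfPrefix, List.ofFn_zero, List.nil_append, cfPair, Prod.mk.injEq] at hpq
      obtain ⟨rfl, rfl⟩ := hpq
      exact Or.inl ⟨rfl, by simpa using hx1, by simpa [cfDigit_succ] using hx⟩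
    · exact Or.inr ⟨m, hm, x, hx1, hx, hpq⟩
  · rintro (⟨rfl, hp1, hp⟩ | ⟨m, -, x, hx1, hx, hpq⟩)
    · refine ⟨0, p, hp1, by rwa [← cfDigit_succ], ?_⟩
      simp [cfPrefix, cfPair]
    · exact ⟨m, x, hx1, hx, hpq⟩

theorem bestApprox_iff_isSemiconvergent {ξ : ℝ} (h1 : 1 < ξ) (hirr : Irrational ξ) {a b : ℕ}
    (hab : a.Coprime b) (hb : 1 ≤ b) (hx0 : (a, b) ≠ (cfDigit ξ 0, 1)) :
    BestApprox ξ (a, b) ↔ IsSemiconvergent ξ (a, b) := by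
  induction a using Nat.strong_induction_on generalizing ξ b with
  | _ a ih =>
  have hk : 1 ≤ cfDigit ξ 0 := one_le_cfDigit h1 hirr 0
  rcases le_or_gt a (cfDigit ξ 0 * b) with hle | hlt
  · refine iff_of_false (fun h => hx0 ?_) (fun h => (h.natFloor_mul_lt h1 hirr).not_ge hle)
    have ha : a = cfDigit ξ 0 * b := le_antisymm hle (h.natFloor_mul_le h1 hirr)
    have hb1 : b = 1 := Nat.Coprime.eq_one_of_dvd hab.symm ⟨cfDigit ξ 0, by rw [ha, mul_comm]⟩
    simp [ha, hb1]
  obtain ⟨q, rfl⟩ : ∃ q, a = cfDigit ξ 0 * b + q := ⟨a - cfDigit ξ 0 * b, by omega⟩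
  have hq : 1 ≤ q := by omega
  rw [bestApprox_shift_iff h1 hirr hb hq, isSemiconvergent_shift_iff]
  by_cases hx1 : (b, q) = (cfDigit ξ 1, 1)
  · simp only [Prod.mk.injEq] at hx1
    exact iff_of_true (Or.inl ⟨hx1.2, hx1.1.le⟩) (Or.inl ⟨hx1.2, hb, hx1.1.le⟩)
  have hbq : b.Coprime q := by
    simpa [Nat.coprime_comm, Nat.add_comm] using hab
  rw [ih b (by nlinarith) (one_lt_cfRem_one h1 hirr) (irrational_cfRem_one hirr) hbq hq
    (by rwa [← cfDigit_succ])]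
  exact or_congr_left ⟨fun ⟨hq1, hbk⟩ => ⟨hq1, hb, hbk⟩, fun ⟨hq1, _, hbk⟩ => ⟨hq1, hbk⟩⟩

theorem stmt_18_general (ξ : ℝ) (hξ : 1 < ξ) (hirr : Irrational ξ) (a b : ℕ)
    (h10 : (a, b) ≠ (1, 0)) (hx0 : (a, b) ≠ (cfDigit ξ 0, 1)) :
    BestApprox ξ (a, b) ↔
      (Nat.Coprime a b ∧ ∃ n : ℕ, 1 ≤ n ∧ ∃ x : ℕ, 1 ≤ x ∧ x ≤ cfDigit ξ n ∧
        (a : ℚ) / (b : ℚ) =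
          cfVal ((List.ofFn fun i : Fin n => cfDigit ξ i.val) ++ [x])) := by
  by_cases hab : a.Coprime b
  swap
  · exact iff_of_false (by rintro (⟨hG, -⟩ | ⟨hG, -⟩) <;> exact hab hG.2) (fun h => hab h.1)
  have hb : 1 ≤ b := Nat.pos_of_ne_zero fun hb => h10 (by simp_all)
  rw [bestApprox_iff_isSemiconvergent hξ hirr hab hb hx0, IsSemiconvergent, and_iff_right hab]
  refine exists_congr fun n => and_congr_right fun _ => exists_congr fun x => and_congr_right
    fun hx => and_congr_right fun _ => ?_
  exact eq_cfPair_iff_div_eq_cfVal hab hb (one_le_of_mem_cfPrefix_append hξ hirr hx) (by simp)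

/-- Theorem `ApproxFrac`: for irrational `ξ > 1` with continued fraction
expansion `[x₀; x₁, x₂, …]` and `(a,b) ∈ 𝒩 \ {(1,0), (x₀,1)}`, the pair `(a,b)` is an
upper or lower best approximation for `ξ` iff `gcd(a,b) = 1` and
`a/b = [x₀; x₁, …, x_{n-1}, x]` for some `n ≥ 1` and `1 ≤ x ≤ xₙ`. -/
theorem stmt_18 (ξ : ℝ) (hξ : 1 < ξ) (hirr : Irrational ξ) (a b : ℕ)
    (hab : (a, b) ≠ (0, 0)) (h10 : (a, b) ≠ (1, 0)) (hx0 : (a, b) ≠ (cfDigit ξ 0, 1)) :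
    BestApprox ξ (a, b) ↔
      (Nat.Coprime a b ∧ ∃ n : ℕ, 1 ≤ n ∧ ∃ x : ℕ, 1 ≤ x ∧ x ≤ cfDigit ξ n ∧
        (a : ℚ) / (b : ℚ) =
          cfVal ((List.ofFn fun i : Fin n => cfDigit ξ i.val) ++ [x])) :=
  stmt_18_general ξ hξ hirr a b h10 hx0
end

section
/- Let n ≥ 2 be an even integer and let ξ be an irrational real number with hₙ/hₙ₋₁ < ξ < hₙ₊₁/hₙ, where (hₙ) is the Fibonacci sequence. Then (hₙ, hₙ₋₁) is a lower best approximation for ξ, i.e., (hₙ, hₙ₋₁) ∈ 𝒢 ∩ ℒ₂(ξ). -/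
open Real Finset

lemma cassini : ∀ k : ℕ, (Nat.fib (k+2) : ℤ) * Nat.fib k - (Nat.fib (k+1) : ℤ)^2 = (-1)^(k+1)
  | 0 => by simp
  | (k+1) => by
    have ih := cassini k
    have h1 : (Nat.fib (k+3) : ℤ) = Nat.fib (k+1) + Nat.fib (k+2) := by
      have := @Nat.fib_add_two (k+1); push_cast [this]; ring
    have h2 : (Nat.fib (k+2) : ℤ) = Nat.fib k + Nat.fib (k+1) := by
      have := @Nat.fib_add_two k; push_cast [this]; ring
    rw [show k+1+2 = k+3 from rfl, h1]
    rw [h2] at ih ⊢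
    ring_nf
    ring_nf at ih
    linarith [ih]

/-- from the proof of Theorem `GRApprox`: if `n ≥ 2` is even and `ξ` is
irrational with `hₙ/hₙ₋₁ < ξ < hₙ₊₁/hₙ`, then `(hₙ, hₙ₋₁)` is a lower best
approximation for `ξ`. -/
theorem stmt_19 (n : ℕ) (hn : 2 ≤ n) (hne : Even n) (ξ : ℝ) (hirr : Irrational ξ)
    (h1 : (Nat.fib n : ℝ) / (Nat.fib (n - 1) : ℝ) < ξ)
    (h2 : ξ < (Nat.fib (n + 1) : ℝ) / (Nat.fib n : ℝ)) :
    (Nat.fib n, Nat.fib (n - 1)) ∈ Gset ∩ L2 ξ := by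
  obtain ⟨k, rfl⟩ : ∃ k, n = k + 1 := ⟨n - 1, by omega⟩
  simp only [Nat.add_sub_cancel] at h1 ⊢
  have hF1 : 0 < Nat.fib k := Nat.fib_pos.2 (by omega)
  have hF2 : 0 < Nat.fib (k+1) := Nat.fib_pos.2 (by omega)
  have hcas : (Nat.fib (k+1+1) : ℤ) * Nat.fib k - (Nat.fib (k+1) : ℤ)^2 = 1 := by
    rw [cassini k, Even.neg_one_pow hne]
  refine ⟨⟨?_, (Nat.fib_coprime_fib_succ k).symm⟩, ⟨?_, ?_⟩, ?_⟩
  · simp [Prod.ext_iff]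
  · simp [Prod.ext_iff]
  · have := (div_lt_iff₀ (by exact_mod_cast hF1)).1 h1
    simpa [mul_comm] using this
  · rintro ⟨m, b⟩ ⟨hy0, hy⟩ hle
    simp only at hy hle ⊢
    have hb : 0 < b := by
      rcases Nat.eq_zero_or_pos b with hb0 | hb0
      · exfalso
        subst hb0
        simp at hy
        have : (0:ℝ) ≤ (m:ℝ) := by positivity
        linarith
      · exact hb0
    by_contra hcon
    push_neg at hcon
    -- hcon : fib(k+1) * b < m * fib k
    have hA : (Nat.fib (k+1) : ℤ) * b + 1 ≤ (m:ℤ) * Nat.fib k := by exact_mod_cast hcon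
    have hBreal : (m:ℝ) * Nat.fib (k+1) < (b:ℝ) * Nat.fib (k+1+1) := by
      have h2' : (b:ℝ) * ξ < (b:ℝ) * ((Nat.fib (k+1+1):ℝ) / (Nat.fib (k+1):ℝ)) := by
        apply mul_lt_mul_of_pos_left h2 (by exact_mod_cast hb)
      have hm : (m:ℝ) < (b:ℝ) * ((Nat.fib (k+1+1):ℝ) / (Nat.fib (k+1):ℝ)) := lt_trans hy h2'
      have hf2 : (0:ℝ) < (Nat.fib (k+1):ℝ) := by exact_mod_cast hF2
      calc (m:ℝ) * Nat.fib (k+1) < (b:ℝ) * ((Nat.fib (k+1+1):ℝ) / (Nat.fib (k+1):ℝ)) * Nat.fib (k+1) :=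
            mul_lt_mul_of_pos_right hm hf2
        _ = (b:ℝ) * Nat.fib (k+1+1) := by field_simp
    have hBn : m * Nat.fib (k+1) < b * Nat.fib (k+1+1) := by exact_mod_cast hBreal
    have hB : (m:ℤ) * Nat.fib (k+1) + 1 ≤ (b:ℤ) * Nat.fib (k+1+1) := by exact_mod_cast hBn
    have hu : (1:ℤ) ≤ (b:ℤ) * Nat.fib (k+1+1) - (m:ℤ) * Nat.fib (k+1) := by linarith
    have hv : (1:ℤ) ≤ (m:ℤ) * Nat.fib k - (b:ℤ) * Nat.fib (k+1) := by linarith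
    have key : (b:ℤ) = (Nat.fib k : ℤ) * ((b:ℤ) * Nat.fib (k+1+1) - (m:ℤ) * Nat.fib (k+1))
        + (Nat.fib (k+1) : ℤ) * ((m:ℤ) * Nat.fib k - (b:ℤ) * Nat.fib (k+1)) := by
      linear_combination (-(b:ℤ)) * hcas
    have hFk : (1:ℤ) ≤ (Nat.fib k : ℤ) := by exact_mod_cast hF1
    have hFk1 : (1:ℤ) ≤ (Nat.fib (k+1) : ℤ) := by exact_mod_cast hF2
    have h3 := mul_le_mul_of_nonneg_left hu (by linarith : (0:ℤ) ≤ (Nat.fib k : ℤ))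
    have h4 := mul_le_mul_of_nonneg_left hv (by linarith : (0:ℤ) ≤ (Nat.fib (k+1) : ℤ))
    have hble : (b:ℤ) ≤ (Nat.fib k : ℤ) := by exact_mod_cast hle
    linarith
end
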